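/- Let Λ be a proper, source-free topological k-graph and c a continuous 𝕋-valued 2-cocycle on Λ. For f ∈ C_c(Λ^m) ⊆ X_m and g ∈ C_c(Λ^n) ⊆ X_n, define (fg)(λ) := c(λ(0,m), λ(m,m+n)) f(λ(0,m)) g(λ(m,m+n)) for λ ∈ Λ^{m+n}. Then for f₁,f₂ ∈ X_m and g₁,g₂ ∈ X_n, the identity ⟨f₁g₁, f₂g₂⟩_{X_{m+n}} = ⟨g₁, ⟨f₁,f₂⟩_{X_m} · g₂⟩_{X_n} holds, and consequently f ⊗ g ↦ fg extends to an isometric linear map X_m ⊗_{C₀(Λ⁰)} X_n → X_{m+n}. -/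

import Mathlib

/-- A topological `k`-graph (Yeend): a small category, presented algebraically on
its (second-countable, locally compact, Hausdorff) space of morphisms with
objects identified with identity morphisms, together with a continuous degree
functor `d : Λ → ℕ^k` satisfying the unique factorisation property.  The range
map is continuous, the source map is a local homeomorphism, and composition
(defined on the set of composable pairs) is continuous and open. -/
structure TopKGraph (k : ℕ) where
  M : Type
  ts : TopologicalSpace M
  t2 : @T2Space M ts
  lc : @LocallyCompactSpace M ts
  sc : @SecondCountableTopology M ts
  r : M → M
  s : M → M
  comp : M → M → M
  d : M → Fin k → ℕ
  rr : ∀ lam, r (r lam) = r lam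
  sr : ∀ lam, s (r lam) = r lam
  rs : ∀ lam, r (s lam) = s lam
  ss' : ∀ lam, s (s lam) = s lam
  r_comp : ∀ {lam mu}, s lam = r mu → r (comp lam mu) = r lam
  s_comp : ∀ {lam mu}, s lam = r mu → s (comp lam mu) = s mu
  comp_assoc : ∀ {lam mu nu}, s lam = r mu → s mu = r nu →
      comp (comp lam mu) nu = comp lam (comp mu nu)
  id_comp : ∀ lam, comp (r lam) lam = lam
  comp_id : ∀ lam, comp lam (s lam) = lam
  d_comp : ∀ {lam mu}, s lam = r mu → d (comp lam mu) = d lam + d mu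
  d_r : ∀ lam, d (r lam) = 0
  d_s : ∀ lam, d (s lam) = 0
  continuous_r : @Continuous M M ts ts r
  continuous_s : @Continuous M M ts ts s
  isLocalHomeomorph_s : @IsLocalHomeomorph M M ts ts s
  continuousOn_comp : @ContinuousOn (M × M) M (@instTopologicalSpaceProd M M ts ts) ts
      (fun p => comp p.1 p.2) {p | s p.1 = r p.2}
  isOpenMap_comp : ∀ V : Set (M × M), @IsOpen (M × M) (@instTopologicalSpaceProd M M ts ts) V →
      @IsOpen M ts ((fun p : M × M => comp p.1 p.2) '' (V ∩ {p | s p.1 = r p.2}))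
  isOpen_deg : ∀ n : Fin k → ℕ, @IsOpen M ts {lam | d lam = n}
  factor : ∀ (lam : M) (m n : Fin k → ℕ), d lam = m + n →
      ∃! p : M × M, s p.1 = r p.2 ∧ comp p.1 p.2 = lam ∧ d p.1 = m ∧ d p.2 = n

attribute [instance] TopKGraph.ts TopKGraph.t2 TopKGraph.lc TopKGraph.sc

variable {k : ℕ}

/-- An `s`-section: a set contained in an open set on which the source map is
injective (equivalently, since `s` is a local homeomorphism, on which `s`
restricts to a homeomorphism onto its image). -/
def TopKGraph.IsSSection (G : TopKGraph k) (W : Set G.M) : Prop :=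
  ∃ U : Set G.M, IsOpen U ∧ W ⊆ U ∧ Set.InjOn G.s U

/-- A topological `k`-graph is proper if, for each `m ∈ ℕ^k`, the preimage under
`r|_{Λ^m}` of any compact set is compact. -/
def TopKGraph.Proper (G : TopKGraph k) : Prop :=
  ∀ (m : Fin k → ℕ) (K : Set G.M), IsCompact K →
    IsCompact {lam : G.M | G.d lam = m ∧ G.r lam ∈ K}

/-- A topological `k`-graph is source-free if `vΛ^{e_i} ≠ ∅` for every vertex `v`
and every `i`. -/
def TopKGraph.SourceFree (G : TopKGraph k) : Prop :=
  ∀ v : G.M, G.r v = v → ∀ i : Fin k,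
    ∃ lam : G.M, G.d lam = Pi.single i 1 ∧ G.r lam = v

/-- A normalised `𝕋`-valued 2-cocycle on a topological `k`-graph. -/
def TopKGraph.IsCocycle (G : TopKGraph k) (c : G.M → G.M → Circle) : Prop :=
  (∀ lam mu nu, G.s lam = G.r mu → G.s mu = G.r nu →
      c lam mu * c (G.comp lam mu) nu = c lam (G.comp mu nu) * c mu nu) ∧
  (∀ lam, c lam (G.s lam) = 1) ∧ (∀ lam, c (G.r lam) lam = 1)

/-- A continuous normalised `𝕋`-valued 2-cocycle on a topological `k`-graph:
normalised, satisfies the cocycle identity, and is continuous on the set of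
composable pairs. -/
def TopKGraph.IsContinuousCocycle (G : TopKGraph k) (c : G.M → G.M → Circle) : Prop :=
  G.IsCocycle c ∧
    ContinuousOn (fun p : G.M × G.M => c p.1 p.2) {p | G.s p.1 = G.r p.2}
open scoped ENNReal ComplexConjugate

/-- The unique factorisation `lam = p.1 ⬝ p.2` of a path `lam` with `d(p.1) = m`
(meaningful whenever `m ≤ d lam`, by the unique factorisation property); thus
`(pathFac G m lam).1 = λ(0,m)` and, for `lam ∈ Λ^n`, `(pathFac G m lam).2 = λ(m,n)`. -/
noncomputable def TopKGraph.pathFac (G : TopKGraph k) (m : Fin k → ℕ) (lam : G.M) :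
    G.M × G.M :=
  letI := Classical.propDecidable; if h : ∃ p : G.M × G.M, G.s p.1 = G.r p.2 ∧ G.comp p.1 p.2 = lam ∧
      G.d p.1 = m ∧ G.d p.2 = G.d lam - m then h.choose else (lam, lam)

/-- An infinite path in `Λ`: a degree-preserving functor `x : Ω_k → Λ`, recorded
by its segments `x(m,n) ∈ Λ^{n-m}` for `m ≤ n` in `ℕ^k`. -/
structure TopKGraph.InfPath (G : TopKGraph k) where
  seg : (Fin k → ℕ) → (Fin k → ℕ) → G.M
  d_seg : ∀ {m n : Fin k → ℕ}, m ≤ n → G.d (seg m n) = n - m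
  seg_id : ∀ m : Fin k → ℕ, seg m m = G.r (seg m m)
  s_seg : ∀ {m n p : Fin k → ℕ}, m ≤ n → n ≤ p → G.s (seg m n) = G.r (seg n p)
  comp_seg : ∀ {m n p : Fin k → ℕ}, m ≤ n → n ≤ p →
      G.comp (seg m n) (seg n p) = seg m p

/-- The cylinder set `Z(U) = {x ∈ Λ^∞ : x(0,n) ∈ U for some n}`. -/
def TopKGraph.cyl (G : TopKGraph k) (U : Set G.M) : Set G.InfPath :=
  {x | ∃ n : Fin k → ℕ, x.seg 0 n ∈ U}

/-- The topology on the infinite-path space `Λ^∞` is generated by the cylinder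
sets `Z(U)` of open subsets `U` of the `Λ^n`, `n ∈ ℕ^k`. -/
instance TopKGraph.instTopInfPath (G : TopKGraph k) : TopologicalSpace G.InfPath :=
  TopologicalSpace.generateFrom
    {S | ∃ (n : Fin k → ℕ) (U : Set G.M), IsOpen U ∧ (∀ lam ∈ U, G.d lam = n) ∧
      S = G.cyl U}

/-- The shift map `T^p : Λ^∞ → Λ^∞`, `T^p(x)(m,n) = x(m+p, n+p)`. -/
def TopKGraph.shift (G : TopKGraph k) (p : Fin k → ℕ) (x : G.InfPath) : G.InfPath where
  seg m n := x.seg (m + p) (n + p)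
  d_seg := by
    intro m n h
    rw [x.d_seg (add_le_add h (le_refl p))]
    funext i
    simp only [Pi.sub_apply, Pi.add_apply]
    omega
  seg_id m := x.seg_id (m + p)
  s_seg := fun h1 h2 => x.s_seg (add_le_add h1 (le_refl p)) (add_le_add h2 (le_refl p))
  comp_seg := fun h1 h2 => x.comp_seg (add_le_add h1 (le_refl p)) (add_le_add h2 (le_refl p))

/-- The `C₀(Λ⁰)`-valued inner product on `X_p`:
`⟨f,g⟩_{X_p}(v) = Σ_{λ ∈ Λ^p v} conj (f λ) * g λ`. -/
noncomputable def TopKGraph.ipX (G : TopKGraph k) (p : Fin k → ℕ)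
    (f g : G.M → ℂ) : G.M → ℂ :=
  fun v => ∑' lam : {lam : G.M // G.d lam = p ∧ G.s lam = v}, conj (f lam.1) * g lam.1

/-- The twisted product `X_m × X_n → X_{m+n}`:
`(f·g)(λ) = c(λ(0,m), λ(m,m+n)) f(λ(0,m)) g(λ(m,m+n))` for `λ ∈ Λ^{m+n}`. -/
noncomputable def TopKGraph.prodX (G : TopKGraph k) (c : G.M → G.M → Circle)
    (m : Fin k → ℕ) (f g : G.M → ℂ) : G.M → ℂ :=
  fun lam => (c (G.pathFac m lam).1 (G.pathFac m lam).2 : ℂ) *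
    f (G.pathFac m lam).1 * g (G.pathFac m lam).2

/-!
Writing `λ ∈ Λ^{m+n} v` as `λ = ν μ` with `μ ∈ Λ^n v` and `ν ∈ Λ^m r(μ)` identifies the index set
of `⟨f₁g₁, f₂g₂⟩(v)` with pairs `(μ, ν)`. Since `|c| = 1`, the cocycle factors cancel in
`conj (f₁g₁)(νμ) · (f₂g₂)(νμ)`, and summing over `ν` first produces `⟨f₁, f₂⟩(r(μ))`.
Compact support and discreteness of the source fibres make every sum finite.
-/

lemma Set.Finite.sigma {ι : Type*} {κ : ι → Type*} {s : Set ι} {t : ∀ i, Set (κ i)}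
    (hs : s.Finite) (ht : ∀ i ∈ s, (t i).Finite) : (s.sigma t).Finite := by
  rw [Set.sigma_eq_biUnion]
  exact hs.biUnion fun i hi => (ht i hi).image _

lemma IsCompact.finite_inter_preimage_singleton {X Y : Type*} [TopologicalSpace X]
    {f : X → Y} (hf : IsLocallyInjective f) {C : Set X} (hC : IsCompact C) (y : Y) :
    (C ∩ f ⁻¹' {y}).Finite := by
  choose U hU hxU hinj using hf
  obtain ⟨t, -, hCt⟩ := hC.elim_nhds_subcover U fun x _ => (hU x).mem_nhds (hxU x)
  have hpiece : ∀ x, (U x ∩ f ⁻¹' {y}).Finite := fun x =>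
    Set.Subsingleton.finite fun a ha b hb => hinj x ha.1 hb.1 (ha.2.trans hb.2.symm)
  refine (t.finite_toSet.biUnion fun x _ => hpiece x).subset ?_
  rintro a ⟨haC, hay⟩
  obtain ⟨x, hxt, hax⟩ := Set.mem_iUnion₂.1 (hCt haC)
  exact Set.mem_biUnion hxt ⟨hax, hay⟩

namespace TopKGraph

variable (G : TopKGraph k)

/-- `Λ^p v`. -/
abbrev Paths (p : Fin k → ℕ) (v : G.M) : Type :=
  {lam : G.M // G.d lam = p ∧ G.s lam = v}

variable {G}

lemma finite_support_paths {f : G.M → ℂ} (hf : HasCompactSupport f) (p : Fin k → ℕ) (v : G.M) :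
    (Function.support fun lam : G.Paths p v => f lam).Finite := by
  refine ((hf.finite_inter_preimage_singleton
    G.isLocalHomeomorph_s.isLocallyInjective v).preimage Subtype.val_injective.injOn).subset ?_
  intro lam hlam
  exact ⟨subset_tsupport f hlam, lam.2.2⟩

lemma pathFac_spec {m n : Fin k → ℕ} {lam : G.M} (h : G.d lam = m + n) :
    G.s (G.pathFac m lam).1 = G.r (G.pathFac m lam).2 ∧
      G.comp (G.pathFac m lam).1 (G.pathFac m lam).2 = lam ∧
      G.d (G.pathFac m lam).1 = m ∧ G.d (G.pathFac m lam).2 = n := by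
  have hsub : G.d lam - m = n := by
    funext i
    simp only [Pi.sub_apply, h, Pi.add_apply]
    omega
  obtain ⟨p, hp, -⟩ := G.factor lam m n h
  have hex : ∃ p : G.M × G.M, G.s p.1 = G.r p.2 ∧ G.comp p.1 p.2 = lam ∧
      G.d p.1 = m ∧ G.d p.2 = G.d lam - m :=
    ⟨p, hp.1, hp.2.1, hp.2.2.1, hsub ▸ hp.2.2.2⟩
  rw [pathFac, dif_pos hex, ← hsub]
  exact hex.choose_spec

lemma pathFac_comp {m : Fin k → ℕ} {x y : G.M} (hxy : G.s x = G.r y) (hx : G.d x = m) :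
    G.pathFac m (G.comp x y) = (x, y) := by
  have hd : G.d (G.comp x y) = m + G.d y := by rw [G.d_comp hxy, hx]
  obtain ⟨p, -, huniq⟩ := G.factor (G.comp x y) m (G.d y) hd
  exact (huniq _ (pathFac_spec hd)).trans (huniq _ ⟨hxy, rfl, hx, rfl⟩).symm

noncomputable def compEquiv (m n : Fin k → ℕ) (v : G.M) :
    (Σ mu : G.Paths n v, G.Paths m (G.r mu.1)) ≃ G.Paths (m + n) v where
  toFun σ := ⟨G.comp σ.2.1 σ.1.1, by rw [G.d_comp σ.2.2.2, σ.2.2.1, σ.1.2.1],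
    by rw [G.s_comp σ.2.2.2, σ.1.2.2]⟩
  invFun lam :=
    have h := pathFac_spec lam.2.1
    ⟨⟨(G.pathFac m lam.1).2, h.2.2.2, by rw [← G.s_comp h.1, h.2.1, lam.2.2]⟩,
      ⟨(G.pathFac m lam.1).1, h.2.2.1, h.1⟩⟩
  left_inv σ :=
    have h := pathFac_comp (m := m) σ.2.2.2 σ.2.2.1
    Sigma.subtype_ext (Subtype.ext (congrArg Prod.snd h)) (congrArg Prod.fst h)
  right_inv lam := Subtype.ext (pathFac_spec lam.2.1).2.1

lemma prodX_comp (c : G.M → G.M → Circle) {m : Fin k → ℕ} (f g : G.M → ℂ) {x y : G.M}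
    (hxy : G.s x = G.r y) (hx : G.d x = m) :
    G.prodX c m f g (G.comp x y) = c x y * f x * g y := by
  simp only [prodX, pathFac_comp hxy hx]

lemma conj_prodX_mul_prodX_comp (c : G.M → G.M → Circle) {m : Fin k → ℕ}
    (f₁ f₂ g₁ g₂ : G.M → ℂ) {x y : G.M} (hxy : G.s x = G.r y) (hx : G.d x = m) :
    conj (G.prodX c m f₁ g₁ (G.comp x y)) * G.prodX c m f₂ g₂ (G.comp x y) =
      conj (g₁ y) * ((conj (f₁ x) * f₂ x) * g₂ y) := by
  have hc : conj (c x y : ℂ) * c x y = 1 := by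
    rw [← Circle.coe_inv_eq_conj, ← Circle.coe_mul, inv_mul_cancel, Circle.coe_one]
  rw [prodX_comp c _ _ hxy hx, prodX_comp c _ _ hxy hx, map_mul, map_mul]
  linear_combination (conj (g₁ y) * ((conj (f₁ x) * f₂ x) * g₂ y)) * hc

lemma summable_sigma_paths {f g : G.M → ℂ} (hf : HasCompactSupport f)
    (hg : HasCompactSupport g) {m n : Fin k → ℕ} {v : G.M}
    (φ : (Σ mu : G.Paths n v, G.Paths m (G.r mu.1)) → ℂ)
    (hφ : ∀ σ, φ σ ≠ 0 → g σ.1.1 ≠ 0 ∧ f σ.2.1 ≠ 0) : Summable φ :=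
  summable_of_hasFiniteSupport <|
    ((finite_support_paths hg n v).sigma fun _ _ => finite_support_paths hf m _).subset hφ

end TopKGraph

theorem finite_path_inner_product_identity_general {k : ℕ} (G : TopKGraph k)
    (c : G.M → G.M → Circle)
    (m n : Fin k → ℕ) (f₁ f₂ g₁ g₂ : G.M → ℂ)
    (hf₁c : HasCompactSupport f₁) (hg₁c : HasCompactSupport g₁) :
    G.ipX (m + n) (G.prodX c m f₁ g₁) (G.prodX c m f₂ g₂)
      = G.ipX n g₁ (fun lam => G.ipX m f₁ f₂ (G.r lam) * g₂ lam) := by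
  funext v
  let e := G.compEquiv m n v
  have hsum := G.summable_sigma_paths hf₁c hg₁c
    (fun σ : (Σ mu : G.Paths n v, G.Paths m (G.r mu.1)) =>
      conj (g₁ σ.1.1) * ((conj (f₁ σ.2.1) * f₂ σ.2.1) * g₂ σ.1.1))
    fun σ hσ => ⟨fun h => hσ (by simp [h]), fun h => hσ (by simp [h])⟩
  calc G.ipX (m + n) (G.prodX c m f₁ g₁) (G.prodX c m f₂ g₂) v
      = ∑' σ, conj (G.prodX c m f₁ g₁ (e σ).1) * G.prodX c m f₂ g₂ (e σ).1 :=
        (e.tsum_eq fun lam => conj (G.prodX c m f₁ g₁ lam.1) * G.prodX c m f₂ g₂ lam.1).symm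
    _ = ∑' σ : (Σ mu : G.Paths n v, G.Paths m (G.r mu.1)),
          conj (g₁ σ.1.1) * ((conj (f₁ σ.2.1) * f₂ σ.2.1) * g₂ σ.1.1) :=
        tsum_congr fun σ => G.conj_prodX_mul_prodX_comp c f₁ f₂ g₁ g₂ σ.2.2.2 σ.2.2.1
    _ = ∑' (mu : G.Paths n v) (nu : G.Paths m (G.r mu.1)),
          conj (g₁ mu.1) * ((conj (f₁ nu.1) * f₂ nu.1) * g₂ mu.1) := hsum.tsum_sigma
    _ = G.ipX n g₁ (fun lam => G.ipX m f₁ f₂ (G.r lam) * g₂ lam) v := by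
        refine tsum_congr fun mu => ?_
        rw [tsum_mul_left, tsum_mul_right]
        rfl

/-- Let `Λ` be a proper, source-free topological `k`-graph and
`c` a continuous `𝕋`-valued 2-cocycle on `Λ`.  For `f ∈ C_c(Λ^m) ⊆ X_m` and
`g ∈ C_c(Λ^n) ⊆ X_n`, define
`(fg)(λ) = c(λ(0,m),λ(m,m+n)) f(λ(0,m)) g(λ(m,m+n))` for `λ ∈ Λ^{m+n}`.  Then
for `f₁, f₂ ∈ X_m` and `g₁, g₂ ∈ X_n`, the identity
`⟨f₁g₁, f₂g₂⟩_{X_{m+n}} = ⟨g₁, ⟨f₁,f₂⟩_{X_m} · g₂⟩_{X_n}` holds (so that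
`f ⊗ g ↦ fg` extends to an isometric linear map
`X_m ⊗_{C₀(Λ⁰)} X_n → X_{m+n}`). -/
theorem finite_path_inner_product_identity {k : ℕ} (G : TopKGraph k)
    (hP : G.Proper) (hSF : G.SourceFree)
    (c : G.M → G.M → Circle) (hc : G.IsContinuousCocycle c)
    (m n : Fin k → ℕ) (f₁ f₂ g₁ g₂ : G.M → ℂ)
    (hf₁ : Continuous f₁) (hf₁c : HasCompactSupport f₁)
    (hf₁d : ∀ lam, f₁ lam ≠ 0 → G.d lam = m)
    (hf₂ : Continuous f₂) (hf₂c : HasCompactSupport f₂)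
    (hf₂d : ∀ lam, f₂ lam ≠ 0 → G.d lam = m)
    (hg₁ : Continuous g₁) (hg₁c : HasCompactSupport g₁)
    (hg₁d : ∀ lam, g₁ lam ≠ 0 → G.d lam = n)
    (hg₂ : Continuous g₂) (hg₂c : HasCompactSupport g₂)
    (hg₂d : ∀ lam, g₂ lam ≠ 0 → G.d lam = n) :
    G.ipX (m + n) (G.prodX c m f₁ g₁) (G.prodX c m f₂ g₂)
      = G.ipX n g₁ (fun lam => G.ipX m f₁ f₂ (G.r lam) * g₂ lam) :=
  finite_path_inner_product_identity_general G c m n f₁ f₂ g₁ g₂ hf₁c hg₁c
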